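/- Let L ⊆ K be a support and σ a strategy of player 1 such that γ₁(δ',σ,τ) = 1 for every initial distribution δ' whose support is contained in L and every strategy τ of player 2. Then there exists N ∈ ℕ such that for every initial distribution δ with support L and every strategy τ of player 2, the probability under δ, σ, τ that a play of length N visits T is at least 1/2. -/

import Mathlib

open scoped Classical

noncomputable section

/-- A probability distribution on a finite type, given by a nonnegative
real-valued density summing to `1`. -/
structure FDist (X : Type*) [Fintype X] where
  f : X → ℝ
  nonneg : ∀ x, 0 ≤ f x
  sum_one : ∑ x, f x = 1

/-- The support of a distribution: the set of points with positive probability. -/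
def FDist.support {X : Type*} [Fintype X] (δ : FDist X) : Finset X :=
  Finset.univ.filter fun x => 0 < δ.f x

/-- The uniform distribution on a nonempty finite set. -/
def uniform {X : Type*} [Fintype X] (L : Finset X) (hL : L.Nonempty) : FDist X where
  f x := if x ∈ L then (L.card : ℝ)⁻¹ else 0
  nonneg x := by split_ifs <;> positivity
  sum_one := by
    rw [Finset.sum_ite_mem, Finset.univ_inter, Finset.sum_const, nsmul_eq_mul,
      mul_inv_cancel₀]
    exact_mod_cast (Finset.card_pos.mpr hL).ne'

/-- Uniform distribution on `L`, defaulting to the uniform distribution on the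
whole type when `L` is empty. -/
def uniformD {X : Type*} [Fintype X] [Nonempty X] (L : Finset X) : FDist X :=
  if h : L.Nonempty then uniform L h else uniform Finset.univ Finset.univ_nonempty

/-- The Dirac distribution on a point. -/
def dirac {X : Type*} [Fintype X] (x : X) : FDist X where
  f y := if y = x then 1 else 0
  nonneg y := by by_cases h : y = x <;> simp [h]
  sum_one := by simp

/-- A stochastic game with partial observation on both sides and a reachability
objective for player 1: states `K`, actions `I`, `J`, signals `C`, `D`, target
states `T`, transition probabilities `p`, and actions encoded in signals via
`act₁`, `act₂`. -/
structure Game (K I J C D : Type*) [Fintype K] [Fintype I] [Fintype J] [Fintype C] [Fintype D] where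
  T : Finset K
  p : K → I → J → C × D × K → ℝ
  p_nonneg : ∀ k i j x, 0 ≤ p k i j x
  p_sum : ∀ k i j, ∑ x : C × D × K, p k i j x = 1
  act₁ : C → I
  act₂ : D → J
  act_compat : ∀ k i j c d l, 0 < p k i j (c, d, l) → i = act₁ c ∧ j = act₂ d

/-- A (behavioral) strategy of player 1: a distribution on actions for each
finite sequence of received signals. -/
abbrev Strategy1 (I C : Type*) [Fintype I] : Type _ := List C → FDist I

/-- A (behavioral) strategy of player 2. -/
abbrev Strategy2 (J D : Type*) [Fintype J] : Type _ := List D → FDist J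

/-- A play with `n+1` states: the initial state followed by `n` steps, each
consisting of a signal for player 1, a signal for player 2 and the next state. -/
structure Hist (K C D : Type*) (n : ℕ) where
  first : K
  steps : Fin n → C × D × K

instance (K C D : Type*) [Fintype K] [Fintype C] [Fintype D] (n : ℕ) :
    Fintype (Hist K C D n) :=
  Fintype.ofEquiv (K × (Fin n → C × D × K))
    { toFun := fun x => ⟨x.1, x.2⟩
      invFun := fun h => (h.first, h.steps)
      left_inv := fun _ => rfl
      right_inv := fun _ => rfl }

namespace Hist

variable {K C D : Type*}

/-- The last state of a play. -/
def last : ∀ {n : ℕ}, Hist K C D n → K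
  | 0, h => h.first
  | n + 1, h => (h.steps (Fin.last n)).2.2

/-- The play obtained by removing the last step. -/
def init {n : ℕ} (h : Hist K C D (n + 1)) : Hist K C D n :=
  ⟨h.first, fun m => h.steps m.castSucc⟩

/-- The `m`-th state of a play, `0`-indexed: `state h 0` is the initial state
(called `k₁` in `1`-indexed notation). -/
def state {n : ℕ} (h : Hist K C D n) (m : Fin (n + 1)) : K :=
  if hm : m.val = 0 then h.first
  else (h.steps ⟨m.val - 1, by have := m.isLt; omega⟩).2.2

/-- The sequence of signals received by player 1 along the play. -/
def sig1 {n : ℕ} (h : Hist K C D n) : List C := List.ofFn fun m => (h.steps m).1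

/-- The sequence of signals received by player 2 along the play. -/
def sig2 {n : ℕ} (h : Hist K C D n) : List D := List.ofFn fun m => (h.steps m).2.1

/-- The play visits the target set `T`. -/
def visits (T : Finset K) {n : ℕ} (h : Hist K C D n) : Prop :=
  ∃ m : Fin (n + 1), h.state m ∈ T

end Hist

namespace Game

variable {K I J C D : Type*} [Fintype K] [Fintype I] [Fintype J] [Fintype C] [Fintype D]

/-- The probability of a given play of `n` steps, under initial distribution `δ`
and strategies `σ`, `τ`. -/
def playProb (G : Game K I J C D) (δ : FDist K) (σ : Strategy1 I C) (τ : Strategy2 J D) :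
    ∀ n : ℕ, Hist K C D n → ℝ
  | 0, h => δ.f h.first
  | n + 1, h =>
      G.playProb δ σ τ n h.init *
        ∑ i : I, ∑ j : J,
          (σ h.init.sig1).f i * (τ h.init.sig2).f j *
            G.p h.init.last i j (h.steps (Fin.last n))

/-- The probability that a play with `n+1` states visits the target set. -/
def reachProb (G : Game K I J C D) (δ : FDist K) (σ : Strategy1 I C)
    (τ : Strategy2 J D) (n : ℕ) : ℝ :=
  ∑ h : Hist K C D n, if h.visits G.T then G.playProb δ σ τ n h else 0

/-- The reachability probability `γ₁(δ,σ,τ)`: the supremum over horizons of the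
probability that the play visits the target set. -/
def val (G : Game K I J C D) (δ : FDist K) (σ : Strategy1 I C) (τ : Strategy2 J D) : ℝ :=
  ⨆ n : ℕ, G.reachProb δ σ τ n

/-- `δ` is almost-surely winning for player 1. -/
def AlmostSureWin1 (G : Game K I J C D) (δ : FDist K) : Prop :=
  ∃ σ, ∀ τ, G.val δ σ τ = 1

/-- `δ` is positively winning for player 1. -/
def PositiveWin1 (G : Game K I J C D) (δ : FDist K) : Prop :=
  ∃ σ, ∀ τ, 0 < G.val δ σ τ

/-- `δ` is positively winning for player 2. -/
def PositiveWin2 (G : Game K I J C D) (δ : FDist K) : Prop :=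
  ∃ τ, ∀ σ, G.val δ σ τ < 1

/-- `δ` is surely (equivalently here, almost-surely) winning for player 2. -/
def SureWin2 (G : Game K I J C D) (δ : FDist K) : Prop :=
  ∃ τ, ∀ σ, G.val δ σ τ = 0

/-- One-step belief operator of player 1. -/
def B1 (G : Game K I J C D) (L : Finset K) (c : C) : Finset K :=
  Finset.univ.filter fun k => ∃ l ∈ L, ∃ d : D, 0 < G.p l (G.act₁ c) (G.act₂ d) (c, d, k)

/-- One-step belief operator of player 2. -/
def B2 (G : Game K I J C D) (L : Finset K) (d : D) : Finset K :=
  Finset.univ.filter fun k => ∃ l ∈ L, ∃ c : C, 0 < G.p l (G.act₁ c) (G.act₂ d) (c, d, k)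

/-- Belief of player 1 after a sequence of signals. -/
def B1seq (G : Game K I J C D) (L : Finset K) (cs : List C) : Finset K := cs.foldl G.B1 L

/-- Belief of player 2 after a sequence of signals. -/
def B2seq (G : Game K I J C D) (L : Finset K) (ds : List D) : Finset K := ds.foldl G.B2 L

/-- One-step pessimistic belief operator of player 1. -/
def B1p (G : Game K I J C D) (L : Finset K) (c : C) : Finset K := G.B1 (L \ G.T) c

/-- One-step pessimistic belief operator of player 2. -/
def B2p (G : Game K I J C D) (L : Finset K) (d : D) : Finset K := G.B2 (L \ G.T) d

/-- Pessimistic belief of player 1 after a sequence of signals. -/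
def B1pseq (G : Game K I J C D) (L : Finset K) (cs : List C) : Finset K := cs.foldl G.B1p L

/-- Pessimistic belief of player 2 after a sequence of signals. -/
def B2pseq (G : Game K I J C D) (L : Finset K) (ds : List D) : Finset K := ds.foldl G.B2p L

/-- The operator `Φ` on collections of subsets of `K ∖ T`. -/
def Phi (G : Game K I J C D) (𝓛 : Set (Finset K)) : Set (Finset K) :=
  {L | L ∈ 𝓛 ∧ L ∩ G.T = ∅ ∧ ∃ j : J, ∀ d : D, G.act₂ d = j → G.B2 L d ∈ 𝓛}

theorem Phi_mono (G : Game K I J C D) : Monotone G.Phi := by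
  intro A B hAB L hL
  obtain ⟨h1, h2, j, hj⟩ := hL
  exact ⟨hAB h1, h2, j, fun d hd => hAB (hj d hd)⟩

/-- `𝓛_∞`, the greatest fixpoint of `Φ`. -/
def Linf (G : Game K I J C D) : Set (Finset K) :=
  OrderHom.gfp ⟨G.Phi, G.Phi_mono⟩

/-- The winning condition of the `𝓛`-game for player 1, on a play with initial
support `L`: some state `k_m` is a target state and all earlier pessimistic
beliefs of player 1 avoid `𝓛`. -/
def LWin (G : Game K I J C D) (𝓛 : Set (Finset K)) (L : Finset K) {n : ℕ}
    (h : Hist K C D n) : Prop :=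
  ∃ m : Fin (n + 1), h.state m ∈ G.T ∧
    ∀ r : ℕ, 1 ≤ r → r ≤ m.val → G.B1pseq L (h.sig1.take r) ∉ 𝓛

/-- The payoff `γ₁^𝓛(δ,σ,τ)` of player 1 in the `𝓛`-game, for an initial
distribution `δ` with support `L`. -/
def Lval (G : Game K I J C D) (𝓛 : Set (Finset K)) (L : Finset K) (δ : FDist K)
    (σ : Strategy1 I C) (τ : Strategy2 J D) : ℝ :=
  ⨆ n : ℕ, ∑ h : Hist K C D n, if G.LWin 𝓛 L h then G.playProb δ σ τ n h else 0

end Game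

/-- The uniformly random strategy `σ_R` of player 1. -/
def randomStrat (I C : Type*) [Fintype I] [Nonempty I] : Strategy1 I C :=
  fun _ => uniform Finset.univ Finset.univ_nonempty
variable {K I J C D : Type*} [Fintype K] [Fintype I] [Fintype J] [Fintype C] [Fintype D]
  [Nonempty K] [Nonempty I] [Nonempty J] [Nonempty C] [Nonempty D]

/-! For each state `k ∈ L` the Dirac distribution at `k` is almost-surely winning, and the
probability of reaching `T` within `n` steps increases with `n` and depends continuously on
player 2's strategy, which ranges over the compact space `List D → stdSimplex ℝ J`. A Dini-type
argument therefore gives a horizon `N_k` after which `T` has been reached with probability above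
`1/2` against every strategy. The reachability probability is linear in the initial distribution,
so `N = max_{k ∈ L} N_k` works for every initial distribution supported by `L`. -/

theorem CompactSpace.exists_forall_lt_of_monotone {X ι α : Type*} [TopologicalSpace X]
    [CompactSpace X] [Preorder ι] [IsDirected ι (· ≤ ·)] [Nonempty ι] [LinearOrder α]
    [TopologicalSpace α] [OrderClosedTopology α] {f : ι → X → α} (hf : ∀ n, Continuous (f n))
    (hmono : ∀ x, Monotone (f · x)) {c : α} (h : ∀ x, ∃ n, c < f n x) :
    ∃ N, ∀ x, c < f N x := by
  obtain ⟨N, hN⟩ := isCompact_univ.elim_directed_cover (fun n => {x | c < f n x})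
    (fun n => isOpen_lt continuous_const (hf n))
    (fun x _ => Set.mem_iUnion.mpr (h x))
    (Monotone.directed_le fun _ _ hmn x hx => hx.trans_le (hmono x hmn))
  exact ⟨N, fun x => hN (Set.mem_univ x)⟩

def FDist.ofStdSimplex {X : Type*} [Fintype X] (x : stdSimplex ℝ X) : FDist X :=
  ⟨x.1, x.2.1, x.2.2⟩

@[simp]
theorem FDist.mem_support {X : Type*} [Fintype X] (δ : FDist X) (x : X) :
    x ∈ δ.support ↔ 0 < δ.f x := by
  simp [FDist.support]

theorem dirac_support {X : Type*} [Fintype X] (x : X) : (dirac x).support = {x} := by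
  refine Finset.ext fun y => ?_
  by_cases hy : y = x <;> simp [dirac, hy]

namespace Hist

variable {K C D : Type*}

def snocEquiv (n : ℕ) : Hist K C D (n + 1) ≃ Hist K C D n × (C × D × K) where
  toFun h := (h.init, h.steps (Fin.last n))
  invFun g := ⟨g.1.first, Fin.snoc g.1.steps g.2⟩
  left_inv h := by
    obtain ⟨k, s⟩ := h
    simp only [init, mk.injEq, true_and]
    funext m
    induction m using Fin.lastCases <;> simp
  right_inv g := by
    obtain ⟨⟨k, s⟩, x⟩ := g
    simp [init]

@[simp]
theorem init_snocEquiv_symm {n : ℕ} (g : Hist K C D n) (x : C × D × K) :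
    ((snocEquiv n).symm (g, x)).init = g :=
  congrArg Prod.fst ((snocEquiv n).right_inv (g, x))

@[simp]
theorem steps_last_snocEquiv_symm {n : ℕ} (g : Hist K C D n) (x : C × D × K) :
    ((snocEquiv n).symm (g, x)).steps (Fin.last n) = x :=
  congrArg Prod.snd ((snocEquiv n).right_inv (g, x))

theorem visits_of_visits_init {T : Finset K} {n : ℕ} {h : Hist K C D (n + 1)}
    (hv : h.init.visits T) : h.visits T := by
  obtain ⟨m, hm⟩ := hv
  refine ⟨m.castSucc, ?_⟩
  by_cases h0 : m.val = 0 <;> simpa [state, h0, init] using hm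

end Hist

namespace Game

variable {K I J C D : Type*} [Fintype K] [Fintype I] [Fintype J] [Fintype C] [Fintype D]
  (G : Game K I J C D) (δ : FDist K) (σ : Strategy1 I C) (τ : Strategy2 J D)

def stepProb {n : ℕ} (g : Hist K C D n) (x : C × D × K) : ℝ :=
  ∑ i : I, ∑ j : J, (σ g.sig1).f i * (τ g.sig2).f j * G.p g.last i j x

theorem stepProb_nonneg {n : ℕ} (g : Hist K C D n) (x : C × D × K) :
    0 ≤ G.stepProb σ τ g x :=
  Finset.sum_nonneg fun i _ => Finset.sum_nonneg fun j _ =>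
    mul_nonneg (mul_nonneg ((σ _).nonneg i) ((τ _).nonneg j)) (G.p_nonneg _ _ _ _)

theorem sum_stepProb {n : ℕ} (g : Hist K C D n) : ∑ x, G.stepProb σ τ g x = 1 := by
  simp only [stepProb, Finset.sum_comm (γ := C × D × K), ← Finset.mul_sum, G.p_sum, mul_one,
    (τ _).sum_one, (σ _).sum_one]

theorem playProb_succ {n : ℕ} (h : Hist K C D (n + 1)) :
    G.playProb δ σ τ (n + 1) h =
      G.playProb δ σ τ n h.init * G.stepProb σ τ h.init (h.steps (Fin.last n)) :=
  rfl

theorem playProb_nonneg : ∀ (n : ℕ) (h : Hist K C D n), 0 ≤ G.playProb δ σ τ n h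
  | 0, _ => δ.nonneg _
  | n + 1, h => mul_nonneg (playProb_nonneg n h.init) (G.stepProb_nonneg σ τ _ _)

theorem sum_hist_succ {M : Type*} [AddCommMonoid M] {n : ℕ} (f : Hist K C D (n + 1) → M) :
    ∑ h, f h = ∑ g : Hist K C D n, ∑ x : C × D × K, f ((Hist.snocEquiv n).symm (g, x)) := by
  rw [← Fintype.sum_prod_type']
  exact Fintype.sum_equiv (Hist.snocEquiv n) _ _ fun h => by simp

/-- Plays that already visit `T` after `n` steps carry the same total mass after `n + 1`. -/
theorem reachProb_le_succ (n : ℕ) : G.reachProb δ σ τ n ≤ G.reachProb δ σ τ (n + 1) := by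
  have hinit : G.reachProb δ σ τ n = ∑ h : Hist K C D (n + 1),
      if h.init.visits G.T then G.playProb δ σ τ (n + 1) h else 0 := by
    rw [reachProb, sum_hist_succ]
    refine Finset.sum_congr rfl fun g _ => ?_
    split_ifs with hv <;>
      simp [playProb_succ, hv, ← Finset.mul_sum, sum_stepProb]
  rw [hinit, reachProb]
  refine Finset.sum_le_sum fun h _ => ?_
  by_cases hv : h.init.visits G.T
  · simp [hv, Hist.visits_of_visits_init hv]
  · simp only [hv, if_false]
    split_ifs
    exacts [G.playProb_nonneg δ σ τ _ h, le_rfl]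

theorem reachProb_mono : Monotone (G.reachProb δ σ τ) :=
  monotone_nat_of_le_succ (G.reachProb_le_succ δ σ τ)

theorem playProb_eq_mul_dirac :
    ∀ (n : ℕ) (h : Hist K C D n),
      G.playProb δ σ τ n h = δ.f h.first * G.playProb (dirac h.first) σ τ n h
  | 0, h => by simp [playProb, dirac]
  | n + 1, h => by
    rw [playProb_succ, playProb_eq_mul_dirac n h.init, playProb_succ, mul_assoc]
    rfl

theorem reachProb_eq_sum_dirac (n : ℕ) :
    G.reachProb δ σ τ n = ∑ k, δ.f k * G.reachProb (dirac k) σ τ n := by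
  simp only [reachProb, Finset.mul_sum]
  rw [Finset.sum_comm]
  refine Finset.sum_congr rfl fun h _ => ?_
  split_ifs
  · rw [G.playProb_eq_mul_dirac δ, Finset.sum_eq_single h.first]
    · intro k _ hk
      rw [G.playProb_eq_mul_dirac (dirac k)]
      simp [dirac, Ne.symm hk]
    · simp
  · simp

theorem le_reachProb_of_forall_dirac {L : Finset K} (hδ : δ.support ⊆ L) {c : ℝ} {n : ℕ}
    (hc : ∀ k ∈ L, c ≤ G.reachProb (dirac k) σ τ n) : c ≤ G.reachProb δ σ τ n := by
  have hout : ∀ k ∉ L, δ.f k = 0 := fun k hk =>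
    (δ.nonneg k).antisymm' (not_lt.mp fun hpos => hk (hδ ((δ.mem_support k).mpr hpos)))
  rw [reachProb_eq_sum_dirac]
  calc c = ∑ k, δ.f k * c := by rw [← Finset.sum_mul, δ.sum_one, one_mul]
    _ ≤ ∑ k, δ.f k * G.reachProb (dirac k) σ τ n := Finset.sum_le_sum fun k _ => by
      by_cases hk : k ∈ L
      · exact mul_le_mul_of_nonneg_left (hc k hk) (δ.nonneg k)
      · simp [hout k hk]

theorem continuous_playProb_ofStdSimplex :
    ∀ (n : ℕ) (h : Hist K C D n), Continuous fun y : List D → stdSimplex ℝ J =>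
      G.playProb δ σ (fun ds => FDist.ofStdSimplex (y ds)) n h
  | 0, _ => continuous_const
  | n + 1, h => by
    refine (continuous_playProb_ofStdSimplex n h.init).mul
      (continuous_finsetSum _ fun i _ => continuous_finsetSum _ fun j _ => ?_)
    have hτ : Continuous fun y : List D → stdSimplex ℝ J =>
        (FDist.ofStdSimplex (y h.init.sig2)).f j :=
      (continuous_apply j).comp (continuous_subtype_val.comp (continuous_apply h.init.sig2))
    exact (continuous_const.mul hτ).mul continuous_const

theorem continuous_reachProb_ofStdSimplex (n : ℕ) :
    Continuous fun y : List D → stdSimplex ℝ J =>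
      G.reachProb δ σ (fun ds => FDist.ofStdSimplex (y ds)) n :=
  continuous_finsetSum _ fun h _ => by
    split_ifs
    exacts [G.continuous_playProb_ofStdSimplex δ σ n h, continuous_const]

theorem exists_horizon_of_val_eq_one (hδ : ∀ τ, G.val δ σ τ = 1) {c : ℝ} (hc : c < 1) :
    ∃ N, ∀ τ, c < G.reachProb δ σ τ N := by
  obtain ⟨N, hN⟩ := CompactSpace.exists_forall_lt_of_monotone
    (G.continuous_reachProb_ofStdSimplex δ σ)
    (fun _ => G.reachProb_mono δ σ _)
    (fun _ => exists_lt_of_lt_ciSup ((hδ _).symm ▸ hc))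
  exact ⟨N, fun τ => hN fun ds => ⟨(τ ds).f, (τ ds).nonneg, (τ ds).sum_one⟩⟩

end Game

theorem uniform_horizon_of_almostsure_general (G : Game K I J C D) (L : Finset K)
    (σ : Strategy1 I C)
    (hAS : ∀ δ' : FDist K, δ'.support ⊆ L → ∀ τ : Strategy2 J D, G.val δ' σ τ = 1) :
    ∃ N : ℕ, ∀ δ : FDist K, δ.support = L →
      ∀ τ : Strategy2 J D, (1 : ℝ) / 2 ≤ G.reachProb δ σ τ N := by
  have hdirac : ∀ k ∈ L, ∃ N, ∀ τ, 1 / 2 < G.reachProb (dirac k) σ τ N := fun k hk =>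
    G.exists_horizon_of_val_eq_one _ σ
      (hAS _ (by simpa [dirac_support] using hk)) (by norm_num)
  choose! N hN using hdirac
  refine ⟨L.sup N, fun δ hδ τ => G.le_reachProb_of_forall_dirac δ σ τ hδ.le fun k hk => ?_⟩
  exact (hN k hk τ).le.trans (G.reachProb_mono _ σ τ (Finset.le_sup hk))

/-- if `σ` almost-surely wins from every initial distribution whose
support is contained in `L`, then there is a uniform horizon `N` such that, from
every initial distribution with support `L` and against every strategy of
player 2, a play of length `N` visits the target with probability at least `1/2`. -/
theorem uniform_horizon_of_almostsure (G : Game K I J C D) (L : Finset K)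
    (hL : L.Nonempty) (σ : Strategy1 I C)
    (hAS : ∀ δ' : FDist K, δ'.support ⊆ L → ∀ τ : Strategy2 J D, G.val δ' σ τ = 1) :
    ∃ N : ℕ, ∀ δ : FDist K, δ.support = L →
      ∀ τ : Strategy2 J D, (1 : ℝ) / 2 ≤ G.reachProb δ σ τ N :=
  uniform_horizon_of_almostsure_general G L σ hAS
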